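/- Let G be an n-vertex Class 2 graph with a full-deficiency pair (a,b) (adjacent vertices with d_G(a) + d_G(b) = Δ + 2) such that ab is a critical edge. Then every vertex x ∈ (N_G(a) ∪ N_G(b)) \ {a,b} has degree Δ. -/

import Mathlib

/-!
Let `Δ` be the maximum degree. Since `ab` is critical, `G - ab` has a `Δ`-edge-coloring, and in
none of them do `a` and `b` miss a common color, for then `ab` could be colored. As `a` and `b`
see `Δ` edges of `G - ab` in total, their color sets partition `{1, …, Δ}`.

Suppose a neighbour `x ≠ b` of `a` has degree `< Δ`, so some color `γ` is missing at `x`;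
let `β` be the color of `ax` (missing at `b`) and `α` a color missing at `a`. If `γ` is missing
at `a` too, recolor `ax` with `γ`: then `β` is missing at both `a` and `b`. Otherwise `γ` is
missing at `b`, and the `α/γ` Kempe chain from `a` must end at `b`, since swapping it would
otherwise free `γ` at `a` and `b`. This chain is a path with ends `a` and `b`, so it avoids `x`,
where `γ` is missing. Swapping the chain through `x` makes `α` missing at `a` and `x`, and
recoloring `ax` with `α` again frees `β` at `a` and `b`.
-/

open SimpleGraph

/-- A proper `k`-edge-coloring of `G` with colors in `{1,…,k}`: every edge receives a color
in `{1,…,k}` and distinct edges sharing a vertex receive distinct colors. -/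
def IsProperEdgeColoring {V : Type*} (G : SimpleGraph V) (k : ℕ) (c : Sym2 V → ℕ) : Prop :=
  (∀ e ∈ G.edgeSet, c e ∈ Finset.Icc 1 k) ∧
  ∀ e ∈ G.edgeSet, ∀ f ∈ G.edgeSet, e ≠ f → (∃ v, v ∈ e ∧ v ∈ f) → c e ≠ c f

/-- `G` admits a proper `k`-edge-coloring. -/
def EdgeColorable {V : Type*} (G : SimpleGraph V) (k : ℕ) : Prop :=
  ∃ c, IsProperEdgeColoring G k c

/-- The chromatic index of `G`: the least `k` such that `G` is `k`-edge-colorable. -/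
noncomputable def chromIndex {V : Type*} (G : SimpleGraph V) : ℕ :=
  sInf {k | EdgeColorable G k}

section

variable {V : Type*}

def colorsAt (H : SimpleGraph V) (c : Sym2 V → ℕ) (v : V) : Set ℕ :=
  (fun w => c s(v, w)) '' H.neighborSet v

lemma colorsAt_mono {H K : SimpleGraph V} (h : K ≤ H) (c : Sym2 V → ℕ) (v : V) :
    colorsAt K c v ⊆ colorsAt H c v :=
  Set.image_mono fun _ hw => h hw

lemma colorsAt_update_of_ne [DecidableEq V] (H : SimpleGraph V) (c : Sym2 V → ℕ) {u v t : V}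
    (γ : ℕ) (hu : t ≠ u) (hv : t ≠ v) :
    colorsAt H (Function.update c s(u, v) γ) t = colorsAt H c t :=
  Set.image_congr fun w _ => Function.update_of_ne
    (fun h => (Sym2.mem_iff.mp (h ▸ Sym2.mem_mk_left t w)).elim hu hv) _ _

lemma SimpleGraph.ncard_neighborSet_eq_degree (G : SimpleGraph V) (v : V)
    [Fintype (G.neighborSet v)] : (G.neighborSet v).ncard = G.degree v := by
  rw [Set.ncard_eq_toFinset_card', ← G.card_neighborSet_eq_degree, Set.toFinset_card]

lemma SimpleGraph.ncard_neighborSet_deleteEdges_add_one {G : SimpleGraph V} {a b : V}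
    (hab : G.Adj a b) [Fintype (G.neighborSet a)] :
    ((G.deleteEdges {s(a, b)}).neighborSet a).ncard + 1 = G.degree a := by
  have : (G.deleteEdges {s(a, b)}).neighborSet a = G.neighborSet a \ {b} := by
    ext w
    simp only [mem_neighborSet, deleteEdges_adj, Set.mem_singleton_iff, Sym2.eq_iff, Set.mem_sdiff]
    have := hab.ne
    tauto
  rw [this, Set.ncard_sdiff_singleton_add_one (G.mem_neighborSet a b |>.mpr hab),
    G.ncard_neighborSet_eq_degree]

lemma exists_mem_Icc_notMem_of_ncard_lt {S : Set ℕ} {k : ℕ} (hS : S.Finite) (h : S.ncard < k) :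
    ∃ n ∈ Finset.Icc 1 k, n ∉ S :=
  Set.exists_mem_notMem_of_ncard_lt_ncard (by simpa using h) hS

namespace IsProperEdgeColoring

variable {H K : SimpleGraph V} {k : ℕ} {c : Sym2 V → ℕ}

lemma anti (hc : IsProperEdgeColoring H k c) (h : K ≤ H) : IsProperEdgeColoring K k c :=
  ⟨fun e he => hc.1 e (edgeSet_mono h he),
    fun e he f hf => hc.2 e (edgeSet_mono h he) f (edgeSet_mono h hf)⟩

lemma colorsAt_subset (hc : IsProperEdgeColoring H k c) (v : V) :
    colorsAt H c v ⊆ Finset.Icc 1 k := by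
  rintro _ ⟨w, hw, rfl⟩
  exact hc.1 _ hw

lemma finite_colorsAt (hc : IsProperEdgeColoring H k c) (v : V) : (colorsAt H c v).Finite :=
  (Finset.Icc 1 k).finite_toSet.subset (hc.colorsAt_subset v)

lemma injOn (hc : IsProperEdgeColoring H k c) (v : V) :
    Set.InjOn (fun w => c s(v, w)) (H.neighborSet v) := by
  intro w hw w' hw' h
  by_contra hne
  exact hc.2 _ hw _ hw' (fun h' => hne (Sym2.congr_right.mp h'))
    ⟨v, Sym2.mem_mk_left _ _, Sym2.mem_mk_left _ _⟩ h

lemma ncard_colorsAt (hc : IsProperEdgeColoring H k c) (v : V) :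
    (colorsAt H c v).ncard = (H.neighborSet v).ncard :=
  (hc.injOn v).ncard_image

lemma update [DecidableEq V] {u v : V} {γ : ℕ}
    (hc : IsProperEdgeColoring (H.deleteEdges {s(u, v)}) k c) (huv : H.Adj u v)
    (hγ : γ ∈ Finset.Icc 1 k) (hu : γ ∉ colorsAt (H.deleteEdges {s(u, v)}) c u)
    (hv : γ ∉ colorsAt (H.deleteEdges {s(u, v)}) c v) :
    IsProperEdgeColoring H k (Function.update c s(u, v) γ) := by
  have hmem : ∀ e ∈ H.edgeSet, e ≠ s(u, v) → e ∈ (H.deleteEdges {s(u, v)}).edgeSet :=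
    fun e he hne => by rw [edgeSet_deleteEdges]; exact ⟨he, hne⟩
  have hnew : ∀ f ∈ H.edgeSet, f ≠ s(u, v) → ∀ t ∈ f, t ∈ s(u, v) → c f ≠ γ := by
    intro f hf hne t htf ht
    obtain ⟨w, rfl⟩ := Sym2.mem_iff_exists.mp htf
    have hw := hmem _ hf hne
    rcases Sym2.mem_iff.mp ht with rfl | rfl
    · exact fun h => hu ⟨w, hw, h⟩
    · exact fun h => hv ⟨w, hw, h⟩
  refine ⟨fun e he => ?_, fun e he f hf hne ⟨t, hte, htf⟩ => ?_⟩
  · rcases eq_or_ne e s(u, v) with rfl | h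
    · rwa [Function.update_self]
    · rw [Function.update_of_ne h]
      exact hc.1 e (hmem e he h)
  rcases eq_or_ne e s(u, v) with rfl | he'
  · rw [Function.update_self, Function.update_of_ne hne.symm]
    exact (hnew f hf hne.symm t htf hte).symm
  rcases eq_or_ne f s(u, v) with rfl | hf'
  · rw [Function.update_self, Function.update_of_ne hne]
    exact hnew e he hne t hte htf
  rw [Function.update_of_ne he', Function.update_of_ne hf']
  exact hc.2 e (hmem e he he') f (hmem f hf hf') hne ⟨t, hte, htf⟩

lemma notMem_colorsAt_update [DecidableEq V] (hc : IsProperEdgeColoring H k c) {u v : V}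
    (huv : H.Adj u v) {γ : ℕ} (hu : γ ∉ colorsAt H c u) :
    c s(u, v) ∉ colorsAt H (Function.update c s(u, v) γ) u := by
  rintro ⟨w, hw, hcw⟩
  dsimp only at hcw
  rcases eq_or_ne w v with rfl | hwv
  · rw [Function.update_self] at hcw
    exact hu ⟨w, huv, hcw.symm⟩
  · rw [Function.update_of_ne (fun h => hwv (Sym2.congr_right.mp h))] at hcw
    exact hwv (hc.injOn u hw huv hcw)

end IsProperEdgeColoring

lemma EdgeColorable.mono {H : SimpleGraph V} {k l : ℕ} (hc : EdgeColorable H k) (h : k ≤ l) :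
    EdgeColorable H l := by
  obtain ⟨c, hrange, hproper⟩ := hc
  exact ⟨c, fun e he => Finset.Icc_subset_Icc_right h (hrange e he), hproper⟩

lemma edgeColorable_nat_card_sym2 [Finite V] (H : SimpleGraph V) :
    EdgeColorable H (Nat.card (Sym2 V)) := by
  refine ⟨fun e => Finite.equivFin (Sym2 V) e + 1, fun e _ => ?_, fun e _ f _ hne _ h => ?_⟩
  · simp
  · exact hne ((Finite.equivFin (Sym2 V)).injective (Fin.ext (Nat.add_right_cancel h)))

lemma edgeColorable_of_chromIndex_le [Finite V] {H : SimpleGraph V} {k : ℕ}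
    (h : chromIndex H ≤ k) : EdgeColorable H k :=
  EdgeColorable.mono
    (Nat.sInf_mem (s := {k | EdgeColorable H k}) ⟨_, edgeColorable_nat_card_sym2 H⟩) h

lemma not_edgeColorable_of_lt_chromIndex {H : SimpleGraph V} {k : ℕ} (h : k < chromIndex H) :
    ¬ EdgeColorable H k :=
  fun hk => (Nat.sInf_le hk : chromIndex H ≤ k).not_gt h

def kempeGraph (H : SimpleGraph V) (c : Sym2 V → ℕ) (α γ : ℕ) : SimpleGraph V where
  Adj u v := H.Adj u v ∧ (c s(u, v) = α ∨ c s(u, v) = γ)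
  symm := ⟨fun u _ h => ⟨h.1.symm, Sym2.eq_swap (a := u) ▸ h.2⟩⟩
  loopless := ⟨fun _ h => H.loopless.irrefl _ h.1⟩

@[simp]
lemma kempeGraph_adj {H : SimpleGraph V} {c : Sym2 V → ℕ} {α γ : ℕ} {u v : V} :
    (kempeGraph H c α γ).Adj u v ↔ H.Adj u v ∧ (c s(u, v) = α ∨ c s(u, v) = γ) :=
  Iff.rfl

open Classical in
/-- The swap fixes colors other than `α` and `γ`, so only the `α/γ` chain through `x`
changes. -/
noncomputable def kempeSwap (H : SimpleGraph V) (c : Sym2 V → ℕ) (α γ : ℕ) (x : V) :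
    Sym2 V → ℕ :=
  fun e => if ∃ u ∈ e, (kempeGraph H c α γ).Reachable x u then Equiv.swap α γ (c e) else c e

section Kempe

variable {H : SimpleGraph V} {k : ℕ} {c : Sym2 V → ℕ} {α γ : ℕ} {x v : V}

open Classical in
lemma kempeSwap_of_mem {e : Sym2 V} (he : e ∈ H.edgeSet) {t : V} (ht : t ∈ e) :
    kempeSwap H c α γ x e =
      if (kempeGraph H c α γ).Reachable x t then Equiv.swap α γ (c e) else c e := by
  obtain ⟨w, rfl⟩ := Sym2.mem_iff_exists.mp ht
  by_cases hcol : c s(t, w) = α ∨ c s(t, w) = γ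
  · -- the other end `w` of a Kempe edge lies in the same chain as `t`
    have hadj : (kempeGraph H c α γ).Adj t w := kempeGraph_adj.mpr ⟨he, hcol⟩
    have hreach : (∃ u ∈ s(t, w), (kempeGraph H c α γ).Reachable x u) ↔
        (kempeGraph H c α γ).Reachable x t := by
      simp only [Sym2.mem_iff, exists_eq_or_imp, exists_eq_left]
      exact ⟨fun h => h.elim id (·.trans hadj.symm.reachable), Or.inl⟩
    simp only [kempeSwap, hreach]
  · push Not at hcol
    simp [kempeSwap, Equiv.swap_apply_of_ne_of_ne hcol.1 hcol.2]

lemma mem_colorsAt_kempeSwap_of_reachable (h : (kempeGraph H c α γ).Reachable x v) {n : ℕ} :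
    n ∈ colorsAt H (kempeSwap H c α γ x) v ↔ Equiv.swap α γ n ∈ colorsAt H c v := by
  have : colorsAt H (kempeSwap H c α γ x) v = Equiv.swap α γ '' colorsAt H c v := by
    rw [colorsAt, colorsAt, Set.image_image]
    exact Set.image_congr fun w hw => by rw [kempeSwap_of_mem hw (Sym2.mem_mk_left v w), if_pos h]
  rw [this, Set.mem_image_equiv, Equiv.symm_swap]

lemma colorsAt_kempeSwap_of_not_reachable (h : ¬ (kempeGraph H c α γ).Reachable x v) :
    colorsAt H (kempeSwap H c α γ x) v = colorsAt H c v :=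
  Set.image_congr fun w hw => by rw [kempeSwap_of_mem hw (Sym2.mem_mk_left v w), if_neg h]

lemma mem_colorsAt_kempeSwap_of_ne {n : ℕ} (hα : n ≠ α) (hγ : n ≠ γ) :
    n ∈ colorsAt H (kempeSwap H c α γ x) v ↔ n ∈ colorsAt H c v := by
  by_cases h : (kempeGraph H c α γ).Reachable x v
  · rw [mem_colorsAt_kempeSwap_of_reachable h, Equiv.swap_apply_of_ne_of_ne hα hγ]
  · rw [colorsAt_kempeSwap_of_not_reachable h]

namespace IsProperEdgeColoring

lemma kempeSwap (hc : IsProperEdgeColoring H k c) (hα : α ∈ Finset.Icc 1 k)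
    (hγ : γ ∈ Finset.Icc 1 k) (x : V) :
    IsProperEdgeColoring H k (kempeSwap H c α γ x) := by
  refine ⟨fun e he => ?_, fun e he f hf hne ⟨t, hte, htf⟩ => ?_⟩
  · unfold _root_.kempeSwap
    split_ifs
    · rw [Equiv.swap_apply_def]
      split_ifs <;> first | assumption | exact hc.1 e he
    · exact hc.1 e he
  · rw [kempeSwap_of_mem he hte, kempeSwap_of_mem hf htf]
    split_ifs
    · exact (Equiv.swap α γ).injective.ne (hc.2 e he f hf hne ⟨t, hte, htf⟩)
    · exact hc.2 e he f hf hne ⟨t, hte, htf⟩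

lemma degree_kempeGraph_le (hc : IsProperEdgeColoring H k c) (v : V)
    [Fintype ((kempeGraph H c α γ).neighborSet v)] :
    (kempeGraph H c α γ).degree v ≤ ({α, γ} ∩ colorsAt H c v).ncard := by
  have hle : kempeGraph H c α γ ≤ H := fun _ _ h => (kempeGraph_adj.mp h).1
  have hinj : Set.InjOn (fun w => c s(v, w)) ((kempeGraph H c α γ).neighborSet v) :=
    (hc.injOn v).mono fun _ hw => hle hw
  rw [← ncard_neighborSet_eq_degree, ← hinj.ncard_image]
  refine Set.ncard_le_ncard ?_ ((Set.toFinite {α, γ}).inter_of_left _)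
  rintro _ ⟨w, hw, rfl⟩
  exact ⟨(kempeGraph_adj.mp hw).2, w, hle hw, rfl⟩

lemma degree_kempeGraph_le_two (hc : IsProperEdgeColoring H k c) (v : V)
    [Fintype ((kempeGraph H c α γ).neighborSet v)] : (kempeGraph H c α γ).degree v ≤ 2 :=
  (hc.degree_kempeGraph_le v).trans <|
    (Set.ncard_inter_le_ncard_left _ _).trans <| (Set.ncard_insert_le _ _).trans (by simp)

lemma degree_kempeGraph_le_one [Fintype ((kempeGraph H c α γ).neighborSet v)]
    (hc : IsProperEdgeColoring H k c) (h : α ∉ colorsAt H c v ∨ γ ∉ colorsAt H c v) :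
    (kempeGraph H c α γ).degree v ≤ 1 := by
  refine (hc.degree_kempeGraph_le v).trans ?_
  obtain ⟨n, hn⟩ : ∃ n, {α, γ} ∩ colorsAt H c v ⊆ {n} := by
    rcases h with h | h
    · exact ⟨γ, fun n ⟨hn, hnv⟩ => hn.resolve_left (by rintro rfl; exact h hnv)⟩
    · exact ⟨α, fun n ⟨hn, hnv⟩ => hn.resolve_right (by rintro rfl; exact h hnv)⟩
  exact (Set.ncard_le_ncard hn).trans (Set.ncard_singleton n).le

end IsProperEdgeColoring

end Kempe

namespace SimpleGraph

variable {W : Type*} [Fintype W] {K : SimpleGraph W} [DecidableRel K.Adj] {a b x : W}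

/-- A connected graph with `n` vertices has degree sum at least `2n - 2`; three vertices of
degree at most one and all others of degree at most two give at most `2n - 3`. -/
lemma Connected.not_three_degree_le_one (hK : K.Connected) (hdeg : ∀ v, K.degree v ≤ 2)
    (hab : a ≠ b) (hax : a ≠ x) (hbx : b ≠ x) :
    ¬ (K.degree a ≤ 1 ∧ K.degree b ≤ 1 ∧ K.degree x ≤ 1) := by
  classical
  rintro ⟨ha, hb, hx⟩
  set T : Finset W := {a, b, x}
  have hT : T.card = 3 := Finset.card_eq_three.mpr ⟨a, b, x, hab, hax, hbx, rfl⟩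
  have hsumT : ∑ v ∈ T, K.degree v ≤ 3 := by
    rw [Finset.sum_insert (by simp [hab, hax]), Finset.sum_pair hbx]
    omega
  have hsumTc : ∑ v ∈ Tᶜ, K.degree v ≤ Tᶜ.card * 2 :=
    Finset.sum_le_card_nsmul _ _ _ fun v _ => hdeg v
  have hcard := T.card_add_card_compl
  have hedges := hK.card_vert_le_card_edgeSet_add_one
  rw [Nat.card_eq_fintype_card, Nat.card_eq_fintype_card, ← edgeFinset_card] at hedges
  have := K.sum_degrees_eq_twice_card_edges
  rw [← Finset.sum_add_sum_compl T] at this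
  omega

lemma not_reachable_of_degree_le_one (hdeg : ∀ v, K.degree v ≤ 2)
    (hab : a ≠ b) (hax : a ≠ x) (hbx : b ≠ x)
    (ha : K.degree a ≤ 1) (hb : K.degree b ≤ 1) (hx : K.degree x ≤ 1)
    (hrab : K.Reachable a b) : ¬ K.Reachable a x := by
  classical
  intro hrax
  set C := K.connectedComponentMk a
  have hsupp {v : W} (h : K.Reachable a v) : v ∈ C.supp := ConnectedComponent.sound h.symm
  have hconn : (K.induce C.supp).Connected := C.connected_toSimpleGraph
  have hdegC (v : C.supp) : (K.induce C.supp).degree v ≤ K.degree v :=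
    (Copy.induce K C.supp).degree_le v
  exact hconn.not_three_degree_le_one (fun v => (hdegC v).trans (hdeg v))
    (a := ⟨a, hsupp .rfl⟩) (b := ⟨b, hsupp hrab⟩) (x := ⟨x, hsupp hrax⟩)
    (by simpa using hab) (by simpa using hax) (by simpa using hbx)
    ⟨(hdegC _).trans ha, (hdegC _).trans hb, (hdegC _).trans hx⟩

end SimpleGraph

section CriticalEdge

variable {G : SimpleGraph V} {k : ℕ} {a b x : V} {c : Sym2 V → ℕ}

lemma edgeColorable_of_notMem_colorsAt (hab : G.Adj a b)
    (hc : IsProperEdgeColoring (G.deleteEdges {s(a, b)}) k c) {n : ℕ} (hn : n ∈ Finset.Icc 1 k)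
    (ha : n ∉ colorsAt (G.deleteEdges {s(a, b)}) c a)
    (hb : n ∉ colorsAt (G.deleteEdges {s(a, b)}) c b) : EdgeColorable G k := by
  classical
  exact ⟨_, hc.update hab hn ha hb⟩

lemma disjoint_colorsAt_of_not_edgeColorable [Fintype (G.neighborSet a)]
    [Fintype (G.neighborSet b)] (hG : ¬ EdgeColorable G k) (hab : G.Adj a b)
    (hdeg : G.degree a + G.degree b = k + 2)
    (hc : IsProperEdgeColoring (G.deleteEdges {s(a, b)}) k c) :
    Disjoint (colorsAt (G.deleteEdges {s(a, b)}) c a)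
      (colorsAt (G.deleteEdges {s(a, b)}) c b) := by
  set S := colorsAt (G.deleteEdges {s(a, b)}) c a
  set T := colorsAt (G.deleteEdges {s(a, b)}) c b
  have hcover : (Finset.Icc 1 k : Set ℕ) ⊆ S ∪ T := fun n hn => by
    by_contra h
    rw [Set.mem_union, not_or] at h
    exact hG (edgeColorable_of_notMem_colorsAt hab hc hn h.1 h.2)
  have hS : S.ncard + 1 = G.degree a := by
    rw [hc.ncard_colorsAt, ncard_neighborSet_deleteEdges_add_one hab]
  have hT : T.ncard + 1 = G.degree b := by
    rw [hc.ncard_colorsAt, Sym2.eq_swap, ncard_neighborSet_deleteEdges_add_one hab.symm]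
  have hunion : k ≤ (S ∪ T).ncard := by
    simpa using Set.ncard_le_ncard hcover ((hc.finite_colorsAt a).union (hc.finite_colorsAt b))
  have hinter := Set.ncard_union_add_ncard_inter S T (hc.finite_colorsAt a) (hc.finite_colorsAt b)
  have : (S ∩ T).ncard = 0 := by omega
  rwa [Set.disjoint_iff_inter_eq_empty,
    ← Set.ncard_eq_zero ((hc.finite_colorsAt a).inter_of_left T)]

/-- Recoloring `ax` with a color missing at `a` and `x` frees the old color of `ax` at `a`. -/
lemma edgeColorable_of_recolor (hab : G.Adj a b)
    (hc : IsProperEdgeColoring (G.deleteEdges {s(a, b)}) k c)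
    (hax : (G.deleteEdges {s(a, b)}).Adj a x) {δ : ℕ} (hδ : δ ∈ Finset.Icc 1 k)
    (hδa : δ ∉ colorsAt (G.deleteEdges {s(a, b)}) c a)
    (hδx : δ ∉ colorsAt (G.deleteEdges {s(a, b)}) c x)
    (hb : c s(a, x) ∉ colorsAt (G.deleteEdges {s(a, b)}) c b) : EdgeColorable G k := by
  classical
  set G' := G.deleteEdges {s(a, b)}
  have hxb : x ≠ b := by
    rintro rfl
    simp [G'] at hax
  have hle : G'.deleteEdges {s(a, x)} ≤ G' := deleteEdges_le _
  have hc' : IsProperEdgeColoring G' k (Function.update c s(a, x) δ) :=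
    (hc.anti hle).update hax hδ (fun h => hδa (colorsAt_mono hle c a h))
      (fun h => hδx (colorsAt_mono hle c x h))
  refine edgeColorable_of_notMem_colorsAt hab hc' (hc.1 _ hax)
    (hc.notMem_colorsAt_update hax hδa) ?_
  rwa [colorsAt_update_of_ne _ _ _ hab.ne' hxb.symm]

lemma edgeColorable_of_notMem_colorsAt_adj [Fintype V] (hab : G.Adj a b)
    (hc : IsProperEdgeColoring (G.deleteEdges {s(a, b)}) k c)
    (hdisj : Disjoint (colorsAt (G.deleteEdges {s(a, b)}) c a)
      (colorsAt (G.deleteEdges {s(a, b)}) c b))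
    {α : ℕ} (hα : α ∈ Finset.Icc 1 k) (hαa : α ∉ colorsAt (G.deleteEdges {s(a, b)}) c a)
    (hax : (G.deleteEdges {s(a, b)}).Adj a x)
    {γ : ℕ} (hγ : γ ∈ Finset.Icc 1 k)
    (hγx : γ ∉ colorsAt (G.deleteEdges {s(a, b)}) c x) :
    EdgeColorable G k := by
  classical
  set G' := G.deleteEdges {s(a, b)}
  set β := c s(a, x)
  have hxb : x ≠ b := by
    rintro rfl
    simp [G'] at hax
  have hβa : β ∈ colorsAt G' c a := ⟨x, hax, rfl⟩
  have hβb : β ∉ colorsAt G' c b := hdisj.notMem_of_mem_left hβa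
  have hβx : β ∈ colorsAt G' c x := ⟨a, hax.symm, congrArg c Sym2.eq_swap⟩
  have hβγ : β ≠ γ := fun h => hγx (h ▸ hβx)
  by_cases hγa : γ ∉ colorsAt G' c a
  · exact edgeColorable_of_recolor hab hc hax hγ hγa hγx hβb
  rw [not_not] at hγa
  have hγb : γ ∉ colorsAt G' c b := hdisj.notMem_of_mem_left hγa
  have hβα : β ≠ α := fun h => hαa (h ▸ hβa)
  set K := kempeGraph G' c α γ
  by_cases hrab : ¬ K.Reachable a b
  · refine edgeColorable_of_notMem_colorsAt hab (hc.kempeSwap hα hγ a) hγ ?_ ?_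
    · rwa [mem_colorsAt_kempeSwap_of_reachable .rfl, Equiv.swap_apply_right]
    · rwa [colorsAt_kempeSwap_of_not_reachable hrab]
  rw [not_not] at hrab
  have hrxa : ¬ K.Reachable x a := fun h =>
    not_reachable_of_degree_le_one (fun v => hc.degree_kempeGraph_le_two v) hab.ne
      (G'.ne_of_adj hax) hxb.symm (hc.degree_kempeGraph_le_one (.inl hαa))
      (hc.degree_kempeGraph_le_one (.inr hγb))
      (hc.degree_kempeGraph_le_one (.inr hγx)) hrab h.symm
  refine edgeColorable_of_recolor hab (hc.kempeSwap hα hγ x) hax hα ?_ ?_ ?_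
  · rwa [colorsAt_kempeSwap_of_not_reachable hrxa]
  · rwa [mem_colorsAt_kempeSwap_of_reachable .rfl, Equiv.swap_apply_left]
  · rwa [kempeSwap_of_mem hax (Sym2.mem_mk_left a x), if_neg hrxa,
      mem_colorsAt_kempeSwap_of_ne hβα hβγ]

lemma degree_eq_maxDegree_of_adj_left [Fintype V] [DecidableRel G.Adj]
    (hclass2 : chromIndex G = G.maxDegree + 1) (hab : G.Adj a b)
    (hfd : G.degree a + G.degree b = G.maxDegree + 2)
    (hcrit : chromIndex (G.deleteEdges {s(a, b)}) < chromIndex G) (hax : G.Adj a x)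
    (hxb : x ≠ b) : G.degree x = G.maxDegree := by
  classical
  set G' := G.deleteEdges {s(a, b)}
  have hG : ¬ EdgeColorable G G.maxDegree := not_edgeColorable_of_lt_chromIndex (by omega)
  obtain ⟨c, hc⟩ : EdgeColorable G' G.maxDegree := edgeColorable_of_chromIndex_le (by omega)
  have hdisj := disjoint_colorsAt_of_not_edgeColorable hG hab hfd hc
  have hαa : (colorsAt G' c a).ncard < G.maxDegree := by
    have : (G'.neighborSet a).ncard + 1 = G.degree a := ncard_neighborSet_deleteEdges_add_one hab
    have := G.degree_le_maxDegree a
    rw [hc.ncard_colorsAt]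
    omega
  obtain ⟨α, hα, hαa⟩ := exists_mem_Icc_notMem_of_ncard_lt (hc.finite_colorsAt a) hαa
  refine (G.degree_le_maxDegree x).antisymm (not_lt.mp fun hx => hG ?_)
  have hγx : (colorsAt G' c x).ncard < G.maxDegree := by
    rw [hc.ncard_colorsAt, G'.ncard_neighborSet_eq_degree]
    exact (degree_le_of_le (deleteEdges_le _)).trans_lt hx
  obtain ⟨γ, hγ, hγx⟩ := exists_mem_Icc_notMem_of_ncard_lt (hc.finite_colorsAt x) hγx
  have hax' : G'.Adj a x := by simp [G', hax, hxb, hab.ne]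
  exact edgeColorable_of_notMem_colorsAt_adj hab hc hdisj hα hαa hax' hγ hγx

end CriticalEdge

end

/-- if `G` is Class 2 with a full-deficiency pair `(a,b)` whose edge `ab` is
critical, then every vertex of `(N(a) ∪ N(b)) \ {a,b}` has degree `Δ`. -/
theorem stmt_10 {V : Type*} [Fintype V] (G : SimpleGraph V) [DecidableRel G.Adj]
    (hclass2 : chromIndex G = G.maxDegree + 1) (a b : V) (hab : G.Adj a b)
    (hfd : G.degree a + G.degree b = G.maxDegree + 2)
    (hcrit : chromIndex (G.deleteEdges {s(a, b)}) < chromIndex G) :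
    ∀ x, x ∈ G.neighborSet a ∪ G.neighborSet b → x ≠ a → x ≠ b →
      G.degree x = G.maxDegree := by
  intro x hx hxa hxb
  rcases hx with hax | hbx
  · exact degree_eq_maxDegree_of_adj_left hclass2 hab hfd hcrit hax hxb
  · rw [Sym2.eq_swap] at hcrit
    exact degree_eq_maxDegree_of_adj_left hclass2 hab.symm (by omega) hcrit hbx hxa
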